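/- arXiv:1602.02572 — 2 statements merged into one kernel-verified Lean document; each statement's English description precedes it below -/
import Mathlib

section
/- Let ω ∈ (0,1), let s ≥ 1, let a_1,…,a_s and b_1,…,b_s be reals with a_j ≥ a_* > 0 and b_j ≥ b_* > 0, let m_1,…,m_s be odd positive integers, set V := {h ∈ ℤ^s : |h_j| ≤ (m_j−1)/2 for all j} and n := ∏_{j=1}^s m_j, and let D := ∑_{h=1}^∞ ω^{a_*(h^{b_*}−1)}. Then ∑_{h ∈ ℤ^s ∖ V} ω_h ≤ n · (−1 + ∏_{j=1}^s (1 + 2 D ω^{a_j ((m_j+1)/2)^{b_j}})). -/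
/-!
Write `ω_h = ∏ⱼ fⱼ(hⱼ)` with `fⱼ(k) = ω^{aⱼ|k|^{bⱼ}}`, and let `Tⱼ`, `Rⱼ` be the sums of `fⱼ` over
`|k| ≤ tⱼ` and `|k| > tⱼ`, where `mⱼ = 2tⱼ + 1`. The lattice sum factorises, so the sum over
`ℤ^s ∖ V` is `∏ (Tⱼ + Rⱼ) - ∏ Tⱼ`, which is monotone in every `Tⱼ` and `Rⱼ`. It remains to use
`Tⱼ ≤ mⱼ` (at most `mⱼ` terms, each `≤ 1`) and `Rⱼ ≤ 2μⱼ D ω^{aⱼμⱼ^{bⱼ}} ≤ mⱼ · 2D ω^{aⱼμⱼ^{bⱼ}}`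
with `μⱼ = tⱼ + 1`. For the tail, cut `{n ≥ μ}` into the blocks `[(q+1)μ, (q+2)μ)`; on the
`q`-th block `a nᵇ ≥ a μᵇ + a_*((q+1)^{b_*} - 1)`, and the block has `μ` elements.

Sums are taken in `ℝ≥0∞` and converted to `ℝ` only at the end, so the one summability fact
needed is that of the series defining `D`.
-/

open scoped ENNReal
open Real Filter

theorem ENNReal.tsum_pi_fin_prod {n : ℕ} {β : Fin n → Type*} (f : ∀ j, β j → ℝ≥0∞) :
    ∑' h : (∀ j, β j), ∏ j, f j (h j) = ∏ j, ∑' k, f j k := by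
  induction n with
  | zero => simp
  | succ n ih =>
    rw [← (Fin.consEquiv β).tsum_eq, ENNReal.tsum_prod', Fin.prod_univ_succ, ← ih,
      ← ENNReal.tsum_mul_right]
    simp [Fin.consEquiv, Fin.prod_univ_succ, ENNReal.tsum_mul_left]

theorem Set.indicator_setOf_forall_mem_prod {ι β R : Type*} [Fintype ι] [CommMonoidWithZero R]
    (I : ι → Set β) (f : ι → β → R) (h : ι → β) :
    {h : ι → β | ∀ j, h j ∈ I j}.indicator (fun h => ∏ j, f j (h j)) h =
      ∏ j, (I j).indicator (f j) (h j) := by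
  by_cases hh : ∀ j, h j ∈ I j
  · simp [Set.indicator_of_mem, hh]
  · obtain ⟨j, hj⟩ := not_forall.mp hh
    rw [Set.indicator_of_notMem (show h ∉ {h : ι → β | ∀ j, h j ∈ I j} from hh)]
    exact (Finset.prod_eq_zero (f := fun j => (I j).indicator (f j) (h j)) (Finset.mem_univ j)
      (Set.indicator_of_notMem hj _)).symm

theorem Finset.prod_add_sub_prod_le {ι : Type*} (s : Finset ι) {T R M R' : ι → ℝ}
    (hT : ∀ i, 0 ≤ T i) (hTM : ∀ i, T i ≤ M i) (hR : ∀ i, 0 ≤ R i) (hRR' : ∀ i, R i ≤ R' i) :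
    ∏ i ∈ s, (T i + R i) - ∏ i ∈ s, T i ≤ ∏ i ∈ s, (M i + R' i) - ∏ i ∈ s, M i := by
  classical
  induction s using Finset.induction_on with
  | empty => simp
  | insert i s hi ih =>
    simp only [Finset.prod_insert hi]
    have hTA : ∏ i ∈ s, T i ≤ ∏ i ∈ s, (T i + R i) :=
      Finset.prod_le_prod (fun i _ => hT i) fun i _ => le_add_of_nonneg_right (hR i)
    have hAC : ∏ i ∈ s, (T i + R i) ≤ ∏ i ∈ s, (M i + R' i) :=
      Finset.prod_le_prod (fun i _ => add_nonneg (hT i) (hR i))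
        fun i _ => add_le_add (hTM i) (hRR' i)
    have hT0 : 0 ≤ ∏ i ∈ s, T i := Finset.prod_nonneg fun i _ => hT i
    nlinarith [hT i, hTM i, hR i, hRR' i]

theorem tsum_compl_forall_mem_prod_le {β : Type*} {s : ℕ} (f : Fin s → β → ℝ)
    (hf : ∀ j k, 0 ≤ f j k) (I : Fin s → Set β) (M : Fin s → ℕ) (c : Fin s → ℝ)
    (hc : ∀ j, 0 ≤ c j)
    (hcenter : ∀ j, ∑' k : I j, ENNReal.ofReal (f j k) ≤ M j)
    (htail : ∀ j, ∑' k : ↥(I j)ᶜ, ENNReal.ofReal (f j k) ≤ ENNReal.ofReal (M j * c j)) :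
    ∑' h : {h : Fin s → β // ¬ ∀ j, h j ∈ I j}, ∏ j, f j (h.1 j) ≤
      ∏ j, (M j * (1 + c j)) - ∏ j, (M j : ℝ) := by
  set g : Fin s → β → ℝ≥0∞ := fun j k => ENNReal.ofReal (f j k)
  set T := fun j => ∑' k : I j, g j k
  set R := fun j => ∑' k : ↥(I j)ᶜ, g j k
  set V := {h : Fin s → β | ∀ j, h j ∈ I j}
  have hT : ∀ j, T j ≠ ∞ := fun j => ne_top_of_le_ne_top (ENNReal.natCast_ne_top _) (hcenter j)
  have hR : ∀ j, R j ≠ ∞ := fun j => ne_top_of_le_ne_top ENNReal.ofReal_ne_top (htail j)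
  have hcenterV : ∑' h : V, ∏ j, g j (h.1 j) = ∏ j, T j := by
    rw [tsum_subtype V (fun h => ∏ j, g j (h j)),
      tsum_congr (Set.indicator_setOf_forall_mem_prod I g), ENNReal.tsum_pi_fin_prod]
    exact Finset.prod_congr rfl fun j _ => (tsum_subtype (I j) (g j)).symm
  have hall : ∑' h : Fin s → β, ∏ j, g j (h j) = ∏ j, (T j + R j) := by
    rw [ENNReal.tsum_pi_fin_prod]
    exact Finset.prod_congr rfl fun j _ =>
      (ENNReal.summable.tsum_add_tsum_compl ENNReal.summable).symm
  have hsplit : ∑' h : ↥Vᶜ, ∏ j, g j (h.1 j) + ∏ j, T j = ∏ j, (T j + R j) := by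
    rw [← hcenterV, ← hall, add_comm]
    exact ENNReal.summable.tsum_add_tsum_compl (f := fun h : Fin s → β => ∏ j, g j (h j))
      ENNReal.summable
  have hL : ∑' h : ↥Vᶜ, ∏ j, g j (h.1 j) ≠ ∞ :=
    ne_top_of_le_ne_top (ENNReal.prod_ne_top fun j _ => ENNReal.add_ne_top.2 ⟨hT j, hR j⟩)
      (hsplit ▸ le_self_add)
  have hLreal := congrArg ENNReal.toReal hsplit
  rw [ENNReal.toReal_add hL (ENNReal.prod_ne_top fun j _ => hT j), ENNReal.toReal_prod,
    ENNReal.toReal_prod] at hLreal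
  simp_rw [ENNReal.toReal_add (hT _) (hR _)] at hLreal
  calc ∑' h : {h : Fin s → β // ¬ ∀ j, h j ∈ I j}, ∏ j, f j (h.1 j)
      = (∑' h : ↥Vᶜ, ∏ j, g j (h.1 j)).toReal := by
        rw [ENNReal.tsum_toReal_eq (f := fun h : ↥Vᶜ => ∏ j, g j (h.1 j))
          fun h => ENNReal.prod_ne_top fun j _ => ENNReal.ofReal_ne_top]
        refine tsum_congr fun h => ?_
        simp [g, ENNReal.toReal_prod, ENNReal.toReal_ofReal (hf _ _)]
    _ = ∏ j, ((T j).toReal + (R j).toReal) - ∏ j, (T j).toReal := eq_sub_of_add_eq hLreal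
    _ ≤ ∏ j, (M j + M j * c j) - ∏ j, (M j : ℝ) :=
        Finset.prod_add_sub_prod_le _ (fun _ => ENNReal.toReal_nonneg)
          (fun j => ENNReal.toReal_le_of_le_ofReal (Nat.cast_nonneg _)
            (by rw [ENNReal.ofReal_natCast]; exact hcenter j))
          (fun _ => ENNReal.toReal_nonneg)
          (fun j => ENNReal.toReal_le_of_le_ofReal (mul_nonneg (Nat.cast_nonneg _) (hc j))
            (htail j))
    _ = _ := by simp_rw [mul_one_add]

theorem Real.summable_rpow_natCast_rpow {q b : ℝ} (hq0 : 0 < q) (hq1 : q < 1) (hb : 0 < b) :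
    Summable fun n : ℕ => q ^ ((n : ℝ) ^ b) := by
  have hc : 0 < -log q / 2 := by linarith [log_neg hq0 hq1]
  have hlog : ∀ᶠ n : ℕ in atTop, log n ≤ -log q / 2 * (n : ℝ) ^ b := by
    filter_upwards [tendsto_natCast_atTop_atTop.eventually
      ((isLittleO_log_rpow_atTop hb).bound hc)] with n hn
    rw [Real.norm_eq_abs, Real.norm_of_nonneg (by positivity)] at hn
    exact (le_abs_self _).trans hn
  refine Summable.of_norm_bounded_eventually_nat (Real.summable_one_div_nat_pow.2 one_lt_two) ?_
  filter_upwards [hlog, eventually_ge_atTop 1] with n hn hn1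
  have hn0 : (0 : ℝ) < n := by exact_mod_cast hn1
  rw [Real.norm_of_nonneg (by positivity)]
  calc q ^ ((n : ℝ) ^ b) = exp (log q * (n : ℝ) ^ b) := rpow_def_of_pos hq0 _
    _ ≤ exp (-(log n * 2)) := exp_le_exp.2 (by linarith)
    _ = 1 / (n : ℝ) ^ 2 := by rw [exp_neg, exp_mul, exp_log hn0, rpow_two, one_div]

theorem mul_rpow_add_mul_rpow_sub_one_le {a b a' b' μ y x : ℝ} (ha' : 0 ≤ a') (ha : a' ≤ a)
    (hb' : 0 ≤ b') (hb : b' ≤ b) (hμ : 1 ≤ μ) (hy : 1 ≤ y) (hx : y * μ ≤ x) :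
    a * μ ^ b + a' * (y ^ b' - 1) ≤ a * x ^ b := by
  have ha0 : 0 ≤ a := ha'.trans ha
  have hb0 : 0 ≤ b := hb'.trans hb
  have hμb : 1 ≤ μ ^ b := one_le_rpow hμ hb0
  have hyb' : 1 ≤ y ^ b' := one_le_rpow hy hb'
  have hyb : y ^ b' ≤ y ^ b := rpow_le_rpow_of_exponent_le hy hb
  have hxb : y ^ b * μ ^ b ≤ x ^ b := by
    rw [← mul_rpow (by linarith) (by linarith)]
    exact rpow_le_rpow (by nlinarith) hx hb0
  nlinarith [mul_nonneg (sub_nonneg.2 ha) (sub_nonneg.2 hyb'),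
    mul_nonneg (mul_nonneg ha0 (sub_nonneg.2 hμb)) (sub_nonneg.2 hyb'),
    mul_nonneg (mul_nonneg ha0 (by linarith : (0:ℝ) ≤ μ ^ b)) (sub_nonneg.2 hyb),
    mul_le_mul_of_nonneg_left hxb ha0]

theorem ENNReal.tsum_int_natAbs_le (φ : ℕ → ℝ≥0∞) : ∑' k : ℤ, φ k.natAbs ≤ 2 * ∑' n, φ n := by
  rw [tsum_of_nat_of_neg_add_one ENNReal.summable ENNReal.summable, two_mul]
  refine add_le_add (by simp) ?_
  simpa only [show ∀ n : ℕ, (-((n : ℤ) + 1)).natAbs = n + 1 by omega] using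
    ENNReal.tsum_comp_le_tsum_of_injective (add_left_injective 1) φ

section OneDimensional

variable {ω a b aStar bStar : ℝ}

theorem tsum_Icc_ofReal_rpow_abs_le (hω0 : 0 ≤ ω) (hω1 : ω ≤ 1) (ha : 0 ≤ a)
    (t : ℕ) :
    ∑' k : (Finset.Icc (-(t : ℤ)) t : Set ℤ), ENNReal.ofReal (ω ^ (a * |(k : ℝ)| ^ b)) ≤
      (2 * t + 1 : ℕ) := by
  rw [Finset.tsum_subtype' (Finset.Icc (-(t : ℤ)) t)
    fun k : ℤ => ENNReal.ofReal (ω ^ (a * |(k : ℝ)| ^ b))]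
  calc _ ≤ (Finset.Icc (-(t : ℤ)) t).card • (1 : ℝ≥0∞) :=
        Finset.sum_le_card_nsmul _ _ _ fun k _ =>
          ENNReal.ofReal_le_one.2 (rpow_le_one hω0 hω1 (by positivity))
    _ = (2 * t + 1 : ℕ) := by
      rw [Int.card_Icc, nsmul_eq_mul, mul_one]
      congr 1
      omega

theorem tsum_ofReal_rpow_add_le (hω0 : 0 < ω) (hω1 : ω < 1) (haStar : 0 < aStar)
    (hbStar : 0 < bStar) (ha : aStar ≤ a) (hb : bStar ≤ b) (μ : ℕ) [NeZero μ] :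
    ∑' n : ℕ, ENNReal.ofReal (ω ^ (a * ((n : ℝ) + μ) ^ b)) ≤
      μ * ENNReal.ofReal (ω ^ (a * (μ : ℝ) ^ b) *
        ∑' k : ℕ, ω ^ (aStar * (((k : ℝ) + 1) ^ bStar - 1))) := by
  set W := ω ^ (a * (μ : ℝ) ^ b)
  set e : ℕ → ℝ := fun k => ω ^ (aStar * (((k : ℝ) + 1) ^ bStar - 1))
  have he : Summable e := by
    have hq : ω ^ aStar < 1 := rpow_lt_one hω0.le hω1 haStar
    refine (((summable_nat_add_iff 1).2
      (summable_rpow_natCast_rpow (by positivity) hq hbStar)).div_const (ω ^ aStar)).congr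
      fun k => ?_
    simp only [e, mul_sub, mul_one, rpow_sub hω0, rpow_mul hω0.le]
    push_cast
    rfl
  have hblock : ∀ (q : ℕ) (r : Fin μ),
      ENNReal.ofReal (ω ^ (a * (((q * μ + r : ℕ) : ℝ) + μ) ^ b)) ≤ ENNReal.ofReal (W * e q) := by
    intro q r
    refine ENNReal.ofReal_le_ofReal ?_
    rw [← rpow_add hω0]
    refine rpow_le_rpow_of_exponent_ge hω0 hω1.le
      (mul_rpow_add_mul_rpow_sub_one_le haStar.le ha hbStar.le hb ?_ ?_ ?_)
    · exact_mod_cast NeZero.one_le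
    · linarith [(q.cast_nonneg : (0 : ℝ) ≤ q)]
    · push_cast
      nlinarith [(r.val.cast_nonneg : (0 : ℝ) ≤ r.val)]
  calc ∑' n : ℕ, ENNReal.ofReal (ω ^ (a * ((n : ℝ) + μ) ^ b))
      = ∑' q : ℕ, ∑' r : Fin μ, ENNReal.ofReal (ω ^ (a * (((q * μ + r : ℕ) : ℝ) + μ) ^ b)) := by
        rw [← (Nat.divModEquiv μ).symm.tsum_eq, ENNReal.tsum_prod']
        rfl
    _ ≤ ∑' q : ℕ, ∑' _ : Fin μ, ENNReal.ofReal (W * e q) :=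
        ENNReal.tsum_le_tsum fun q => ENNReal.tsum_le_tsum (hblock q)
    _ = μ * ENNReal.ofReal (W * ∑' k, e k) := by
        simp only [ENNReal.tsum_const, ENat.card_eq_coe_fintype_card, Fintype.card_fin,
          ENat.toENNReal_coe, ENNReal.tsum_mul_left]
        rw [← ENNReal.ofReal_tsum_of_nonneg (fun k => by positivity) (he.mul_left W),
          tsum_mul_left]

theorem tsum_compl_Icc_ofReal_rpow_abs_le (hω0 : 0 < ω) (hω1 : ω < 1) (haStar : 0 < aStar)
    (hbStar : 0 < bStar) (ha : aStar ≤ a) (hb : bStar ≤ b) (t : ℕ) :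
    ∑' k : ↥(Finset.Icc (-(t : ℤ)) t : Set ℤ)ᶜ, ENNReal.ofReal (ω ^ (a * |(k : ℝ)| ^ b)) ≤
      ENNReal.ofReal ((2 * t + 1 : ℕ) * (2 * (∑' k : ℕ, ω ^ (aStar * (((k : ℝ) + 1) ^ bStar - 1))) *
        ω ^ (a * ((t : ℝ) + 1) ^ b))) := by
  set D := ∑' k : ℕ, ω ^ (aStar * (((k : ℝ) + 1) ^ bStar - 1))
  set φ : ℕ → ℝ≥0∞ := fun n => ENNReal.ofReal (ω ^ (a * (n : ℝ) ^ b))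
  set ψ : ℕ → ℝ≥0∞ := {n | t < n}.indicator φ
  have hD : 0 ≤ D := tsum_nonneg fun k => by positivity
  have hsupp : Function.support ψ ⊆ Set.range (· + (t + 1)) := fun n hn =>
    ⟨n - (t + 1), by
      have : t < n := Set.mem_of_indicator_ne_zero hn
      simp only
      omega⟩
  calc ∑' k : ↥(Finset.Icc (-(t : ℤ)) t : Set ℤ)ᶜ, ENNReal.ofReal (ω ^ (a * |(k : ℝ)| ^ b))
      = ∑' k : ℤ, ψ k.natAbs := by
        rw [tsum_subtype (↑(Finset.Icc (-(t : ℤ)) t))ᶜ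
          (fun k : ℤ => ENNReal.ofReal (ω ^ (a * |(k : ℝ)| ^ b)))]
        refine tsum_congr fun k => ?_
        have hk : k ∈ (↑(Finset.Icc (-(t : ℤ)) t) : Set ℤ)ᶜ ↔ t < k.natAbs := by simp; omega
        simp only [ψ, φ, Set.indicator_apply, hk, Set.mem_ofPred_eq, Nat.cast_natAbs,
          Int.cast_abs]
    _ ≤ 2 * ∑' n, ψ n := ENNReal.tsum_int_natAbs_le ψ
    _ = 2 * ∑' n : ℕ, ENNReal.ofReal (ω ^ (a * ((n : ℝ) + ((t + 1 : ℕ) : ℝ)) ^ b)) := by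
        rw [← (add_left_injective (t + 1)).tsum_eq hsupp]
        congr 1
        refine tsum_congr fun n => ?_
        simp only [ψ, φ, Set.indicator_apply, Set.mem_ofPred_eq, Nat.cast_add]
        rw [if_pos (by omega)]
    _ ≤ 2 * ((t + 1 : ℕ) * ENNReal.ofReal (ω ^ (a * ((t + 1 : ℕ) : ℝ) ^ b) * D)) := by
        gcongr
        exact tsum_ofReal_rpow_add_le hω0 hω1 haStar hbStar ha hb (t + 1)
    _ ≤ _ := by
        rw [← ENNReal.ofReal_natCast, ← ENNReal.ofReal_mul (by positivity),
          ← ENNReal.ofReal_ofNat 2, ← ENNReal.ofReal_mul (by positivity)]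
        refine ENNReal.ofReal_le_ofReal ?_
        push_cast
        nlinarith [mul_nonneg hD (rpow_nonneg hω0.le (a * ((t : ℝ) + 1) ^ b)),
          (t.cast_nonneg : (0 : ℝ) ≤ t)]

end OneDimensional

theorem stmt16_general (ω : ℝ) (hω : ω ∈ Set.Ioo (0:ℝ) 1) (s : ℕ)
    (a b : Fin s → ℝ) (aStar bStar : ℝ) (haStar : 0 < aStar) (hbStar : 0 < bStar)
    (ha : ∀ j, aStar ≤ a j) (hb : ∀ j, bStar ≤ b j)
    (m : Fin s → ℕ) (hmodd : ∀ j, Odd (m j)) :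
    ∑' h : {h : Fin s → ℤ // ¬ ∀ j, 2 * |h j| ≤ (m j : ℤ) - 1},
        ω ^ (∑ j, a j * |(h.1 j : ℝ)| ^ (b j)) ≤
      ((∏ j, m j : ℕ) : ℝ) *
        (-1 + ∏ j, (1 + 2 * (∑' k : ℕ, ω ^ (aStar * (((k : ℝ) + 1) ^ bStar - 1))) *
          ω ^ (a j * (((m j : ℝ) + 1) / 2) ^ (b j)))) := by
  obtain ⟨hω0, hω1⟩ := hω
  choose t ht using hmodd
  set D := ∑' k : ℕ, ω ^ (aStar * (((k : ℝ) + 1) ^ bStar - 1))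
  have hV : ∀ h : Fin s → ℤ, (¬ ∀ j, 2 * |h j| ≤ (m j : ℤ) - 1) ↔
      ¬ ∀ j, h j ∈ (Finset.Icc (-(t j : ℤ)) (t j) : Set ℤ) := fun h => by
    simp only [ht, Finset.coe_Icc, Set.mem_Icc, ← abs_le]
    exact not_congr (forall_congr' fun j => by push_cast; omega)
  have hμ : ∀ j, ((m j : ℝ) + 1) / 2 = (t j : ℝ) + 1 := fun j => by rw [ht j]; push_cast; ring
  calc _ = ∑' h : {h : Fin s → ℤ // ¬ ∀ j, h j ∈ (Finset.Icc (-(t j : ℤ)) (t j) : Set ℤ)},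
        ∏ j, ω ^ (a j * |(h.1 j : ℝ)| ^ b j) := by
        rw [← (Equiv.subtypeEquivRight hV).tsum_eq]
        refine tsum_congr fun h => ?_
        simp [rpow_sum_of_pos hω0]
    _ ≤ ∏ j, (m j * (1 + 2 * D * ω ^ (a j * ((t j : ℝ) + 1) ^ b j))) - ∏ j, (m j : ℝ) :=
        tsum_compl_forall_mem_prod_le (fun j (k : ℤ) => ω ^ (a j * |(k : ℝ)| ^ b j))
          (fun _ _ => by positivity) (fun j => (Finset.Icc (-(t j : ℤ)) (t j) : Set ℤ)) m _
          (fun _ => by positivity)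
          (fun j => by
            rw [ht j]
            exact tsum_Icc_ofReal_rpow_abs_le hω0.le hω1.le (haStar.trans_le (ha j)).le (t j))
          (fun j => by
            rw [ht j]
            exact tsum_compl_Icc_ofReal_rpow_abs_le hω0 hω1 haStar hbStar (ha j) (hb j) (t j))
    _ = _ := by
        simp_rw [hμ, Finset.prod_mul_distrib, Nat.cast_prod]
        ring

/-- for odd mesh-sizes m_j, the fundamental domain
V = {h ∈ ℤ^s : |h_j| ≤ (m_j-1)/2}, n = ∏_j m_j and
D = ∑_{h=1}^∞ ω^{a_*(h^{b_*}-1)}, one has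
∑_{h ∈ ℤ^s ∖ V} ω_h ≤ n(-1 + ∏_{j=1}^s (1 + 2 D ω^{a_j((m_j+1)/2)^{b_j}})). -/
theorem stmt16 (ω : ℝ) (hω : ω ∈ Set.Ioo (0:ℝ) 1) (s : ℕ) (hs : 1 ≤ s)
    (a b : Fin s → ℝ) (aStar bStar : ℝ) (haStar : 0 < aStar) (hbStar : 0 < bStar)
    (ha : ∀ j, aStar ≤ a j) (hb : ∀ j, bStar ≤ b j)
    (m : Fin s → ℕ) (hm : ∀ j, 0 < m j) (hmodd : ∀ j, Odd (m j)) :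
    ∑' h : {h : Fin s → ℤ // ¬ ∀ j, 2 * |h j| ≤ (m j : ℤ) - 1},
        ω ^ (∑ j, a j * |(h.1 j : ℝ)| ^ (b j)) ≤
      ((∏ j, m j : ℕ) : ℝ) *
        (-1 + ∏ j, (1 + 2 * (∑' k : ℕ, ω ^ (aStar * (((k : ℝ) + 1) ^ bStar - 1))) *
          ω ^ (a j * (((m j : ℝ) + 1) / 2) ^ (b j)))) :=
  stmt16_general ω hω s a b aStar bStar haStar hbStar ha hb m hmodd
end

section
/- Let ω ∈ (0,1), let s ≥ 1, let a_1,…,a_s and b_1,…,b_s be reals with a_j ≥ a_* > 0 and b_j ≥ b_* > 0, and let η ∈ (0,1). Then for every natural number n ≥ 1 there exists a finite subset S ⊆ ℤ^s with |S| ≤ n such that ∑_{h ∈ ℤ^s ∖ S} ω_h ≤ (η/(1−η)) · n^{−(1−η)/η} · ∏_{j=1}^s (1 + 2 D_η ω^{η a_j})^{1/η}, where D_η := ∑_{h=1}^∞ ω^{η a_*(h^{b_*}−1)}. -/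
/-! With `q = ω ^ η`, the numbers `μ_h = ω_h ^ η` factor as `∏_j q ^ (a_j |h_j| ^ b_j)`, so
`∑_h μ_h ≤ ∏_j (1 + 2 D_η q ^ a_j) =: M`. If the indices are ranked by decreasing `μ_h`, the one
of rank `r` satisfies `(r + 1) μ_h ≤ M`. Taking for `S` the `n` indices of smallest rank, the tail
is at most `∑_{k ≥ n} (M / (k + 1)) ^ (1/η) ≤ M ^ (1/η) n ^ (1 - 1/η) / (1/η - 1)` by the
integral test. -/

open Real Finset Function

theorem tsum_nat_add_rpow_neg_le {p : ℝ} (hp : 1 < p) {n : ℕ} (hn : 0 < n) :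
    ∑' k : ℕ, ((k + n + 1 : ℕ) : ℝ) ^ (-p) ≤ (n : ℝ) ^ (1 - p) / (p - 1) := by
  have hn' : (0 : ℝ) < n := by exact_mod_cast hn
  have anti : AntitoneOn (fun x : ℝ => x ^ (-p)) (Set.Ici (n : ℝ)) := fun x hx _ _ hxy =>
    rpow_le_rpow_of_nonpos (hn'.trans_le hx) hxy (by linarith)
  calc _ ≤ ∫ x in Set.Ioi (n : ℝ), x ^ (-p) :=
        anti.tsum_comp_add_le_integral n (integrableOn_Ioi_rpow_of_lt (by linarith) hn')
          fun x hx => rpow_nonneg (hn'.trans hx).le _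
    _ = _ := by
        rw [integral_Ioi_rpow_of_lt (by linarith) hn', ← neg_div_neg_eq, neg_neg]
        ring_nf

theorem exists_injective_rank_mul_le_tsum {ι : Type*} {μ : ι → ℝ} (hpos : ∀ i, 0 < μ i)
    (hμ : Summable μ) : ∃ r : ι → ℕ, Injective r ∧ ∀ i, (r i + 1) * μ i ≤ ∑' j, μ j := by
  classical
  have : Countable ι := Set.countable_univ_iff.1
    (hμ.countable_support.mono fun i _ => (hpos i).ne')
  obtain ⟨e, he⟩ := Countable.exists_injective_nat ι
  -- ties between values of `μ` are broken by an injection into `ℕ`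
  let key : ι → Lex (ℝᵒᵈ × ℕ) := fun i => toLex (OrderDual.toDual (μ i), e i)
  have key_inj : Injective key := fun i j h => he (congrArg (fun x => (ofLex x).2) h)
  have le_of_key {i j : ι} (h : key j ≤ key i) : μ i ≤ μ j := by
    rcases Prod.Lex.le_iff.1 h with h | h
    · exact (show μ i < μ j from h).le
    · exact (show μ j = μ i from h.1).ge
  have finite_below (i : ι) : {j | key j < key i}.Finite :=
    (Filter.eventually_cofinite.1
      (hμ.tendsto_cofinite_zero.eventually (gt_mem_nhds (hpos i)))).subset
      fun j hj => (le_of_key hj.le).not_gt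
  let below (i : ι) : Finset ι := (finite_below i).toFinset
  have rank_lt {i j : ι} (h : key i < key j) : (below i).card < (below j).card := by
    refine card_lt_card ((ssubset_iff_of_subset fun k hk => ?_).2 ⟨i, ?_, ?_⟩)
    · simp only [below, Set.Finite.mem_toFinset] at hk ⊢
      exact hk.trans h
    · simpa [below] using h
    · simp [below]
  refine ⟨fun i => (below i).card, fun i j h => ?_, fun i => ?_⟩
  · by_contra hne
    rcases lt_or_gt_of_ne (key_inj.ne hne) with hlt | hlt
    · exact (rank_lt hlt).ne h
    · exact (rank_lt hlt).ne' h
  · have hi : i ∉ below i := by simp [below]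
    calc ((below i).card + 1 : ℝ) * μ i = (insert i (below i)).card • μ i := by
          rw [card_insert_of_notMem hi, nsmul_eq_mul]; push_cast; ring
      _ ≤ ∑ j ∈ insert i (below i), μ j := card_nsmul_le_sum _ _ _ fun j hj => by
          rcases mem_insert.1 hj with rfl | hj
          · exact le_rfl
          · exact le_of_key (by simp only [below, Set.Finite.mem_toFinset] at hj; exact hj.le)
      _ ≤ ∑' j, μ j := hμ.sum_le_tsum _ fun j _ => (hpos j).le

theorem exists_card_le_tsum_compl_rpow_le {ι : Type*} {μ : ι → ℝ}
    (hpos : ∀ i, 0 < μ i) (hμ : Summable μ) {p : ℝ} (hp : 1 < p) {n : ℕ} (hn : 0 < n) :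
    ∃ S : Finset ι, S.card ≤ n ∧
      ∑' i : {i // i ∉ S}, μ i ^ p ≤ (∑' i, μ i) ^ p * ((n : ℝ) ^ (1 - p) / (p - 1)) := by
  obtain ⟨r, hr, hrμ⟩ := exists_injective_rank_mul_le_tsum hpos hμ
  set M := ∑' i, μ i
  have hM : 0 ≤ M := tsum_nonneg fun i => (hpos i).le
  let S : Finset ι := (range n).preimage r hr.injOn
  have hrS {i : ι} (hi : i ∉ S) : n ≤ r i := by simpa [S] using hi
  let g : ℕ → ℝ := fun k => M ^ p * ((k + n + 1 : ℕ) : ℝ) ^ (-p)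
  have hg : Summable g := ((summable_nat_rpow.2 (by linarith)).comp_injective
    (add_left_injective (n + 1))).mul_left _
  have hg0 (k : ℕ) : 0 ≤ g k := mul_nonneg (rpow_nonneg hM _) (rpow_nonneg (Nat.cast_nonneg _) _)
  have hinj : Injective fun i : {i // i ∉ S} => r i - n := fun i j h =>
    Subtype.ext (hr (by have := hrS i.2; have := hrS j.2; simp only at h; omega))
  have hbound (i : {i // i ∉ S}) : μ i ^ p ≤ g (r i - n) := by
    have hri : ((r i - n + n + 1 : ℕ) : ℝ) = r i + 1 := by
      rw [Nat.sub_add_cancel (hrS i.2)]; push_cast; ring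
    have hle : μ i ≤ M / (r i + 1) := by rw [le_div_iff₀ (by positivity)]; linarith [hrμ i]
    calc μ i ^ p ≤ (M / (r i + 1)) ^ p := rpow_le_rpow (hpos i).le hle (by linarith)
      _ = g (r i - n) := by
        simp only [g, hri]
        rw [div_rpow hM (by positivity), rpow_neg (by positivity), div_eq_mul_inv]
  refine ⟨S, (card_le_card_of_injOn r (fun i hi => by simpa [S] using hi) hr.injOn).trans
    (card_range n).le, ?_⟩
  have hsub : Summable fun i : {i // i ∉ S} => g (r i - n) := hg.comp_injective hinj
  have hsumL : Summable fun i : {i // i ∉ S} => μ i ^ p :=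
    hsub.of_nonneg_of_le (fun i => (rpow_pos_of_pos (hpos i) p).le) hbound
  calc ∑' i : {i // i ∉ S}, μ i ^ p ≤ ∑' i : {i // i ∉ S}, g (r i - n) :=
        hsumL.tsum_le_tsum hbound hsub
    _ ≤ ∑' k, g k := tsum_comp_le_tsum_of_inj hg hg0 hinj
    _ = M ^ p * ∑' k : ℕ, ((k + n + 1 : ℕ) : ℝ) ^ (-p) := tsum_mul_left
    _ ≤ M ^ p * ((n : ℝ) ^ (1 - p) / (p - 1)) :=
        mul_le_mul_of_nonneg_left (tsum_nat_add_rpow_neg_le hp hn) (rpow_nonneg hM _)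

theorem sum_prod_le_prod_tsum {ι α : Type*} [Fintype ι] {c : ι → α → ℝ}
    (hc : ∀ j k, 0 ≤ c j k) (hsum : ∀ j, Summable (c j)) (F : Finset (ι → α)) :
    ∑ h ∈ F, ∏ j, c j (h j) ≤ ∏ j, ∑' k, c j k := by
  classical
  calc ∑ h ∈ F, ∏ j, c j (h j)
      ≤ ∑ h ∈ Fintype.piFinset fun j => F.image (· j), ∏ j, c j (h j) :=
        sum_le_sum_of_subset_of_nonneg
          (fun h hh => Fintype.mem_piFinset.2 fun j => mem_image_of_mem _ hh)
          fun h _ _ => prod_nonneg fun j _ => hc j (h j)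
    _ = ∏ j, ∑ k ∈ F.image (· j), c j k := (prod_univ_sum _ _).symm
    _ ≤ ∏ j, ∑' k, c j k := prod_le_prod (fun j _ => sum_nonneg fun k _ => hc j k)
        fun j _ => (hsum j).sum_le_tsum _ fun k _ => hc j k

theorem summable_rpow_mul_rpow_sub_one {q c b : ℝ} (hq0 : 0 < q) (hq1 : q < 1) (hc : 0 < c)
    (hb : 0 < b) : Summable fun k : ℕ => q ^ (c * (((k : ℝ) + 1) ^ b - 1)) := by
  have hint : MeasureTheory.IntegrableOn (fun x : ℝ => q ^ (c * x ^ b)) (Set.Ioi 0) :=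
    (integrableOn_rpow_mul_exp_neg_mul_rpow (s := 0) (by norm_num) hb
      (mul_pos hc (neg_pos.2 (log_neg hq0 hq1)))).congr_fun
      (fun x _ => by simp only [rpow_zero, one_mul, rpow_def_of_pos hq0]; ring_nf)
      measurableSet_Ioi
  have anti : AntitoneOn (fun x : ℝ => q ^ (c * x ^ b)) (Set.Ici 0) := fun x hx y _ hxy =>
    rpow_le_rpow_of_exponent_ge hq0 hq1.le
      (mul_le_mul_of_nonneg_left (rpow_le_rpow hx hxy hb.le) hc.le)
  have hshift := (summable_nat_add_iff 1).2
    (anti.summable_of_integrableOn_Ioi_zero hint fun _ _ => (rpow_pos_of_pos hq0 _).le)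
  refine (hshift.mul_left (q ^ (-c))).congr fun k => ?_
  rw [← rpow_add hq0]
  push_cast
  ring_nf

theorem rpow_mul_rpow_le_rpow_mul_rpow_sub_one {q a b a' b' x : ℝ} (hq0 : 0 < q) (hq1 : q ≤ 1)
    (ha' : 0 ≤ a') (ha : a' ≤ a) (hb' : 0 ≤ b') (hb : b' ≤ b) (hx : 1 ≤ x) :
    q ^ (a * x ^ b) ≤ q ^ a * q ^ (a' * (x ^ b' - 1)) := by
  rw [← rpow_add hq0]
  apply rpow_le_rpow_of_exponent_ge hq0 hq1
  have h1 : 1 ≤ x ^ b' := one_le_rpow hx hb'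
  have h2 : x ^ b' ≤ x ^ b := rpow_le_rpow_of_exponent_le hx hb
  nlinarith [mul_le_mul_of_nonneg_left h2 (ha'.trans ha),
    mul_nonneg (sub_nonneg.2 ha) (sub_nonneg.2 h1)]

theorem summable_and_tsum_int_rpow_le {q a b a' b' : ℝ} (hq0 : 0 < q) (hq1 : q < 1)
    (ha' : 0 < a') (hb' : 0 < b') (ha : a' ≤ a) (hb : b' ≤ b) :
    Summable (fun k : ℤ => q ^ (a * |(k : ℝ)| ^ b)) ∧
      ∑' k : ℤ, q ^ (a * |(k : ℝ)| ^ b) ≤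
        1 + 2 * (∑' k : ℕ, q ^ (a' * (((k : ℝ) + 1) ^ b' - 1))) * q ^ a := by
  set f : ℤ → ℝ := fun k => q ^ (a * |(k : ℝ)| ^ b)
  have hD := summable_rpow_mul_rpow_sub_one hq0 hq1 ha' hb'
  have hle (k : ℕ) : f (k + 1) ≤ q ^ a * q ^ (a' * (((k : ℝ) + 1) ^ b' - 1)) := by
    have hk : |((k + 1 : ℤ) : ℝ)| = (k : ℝ) + 1 := by
      push_cast; exact abs_of_nonneg (by positivity)
    simp only [f, hk]
    exact rpow_mul_rpow_le_rpow_mul_rpow_sub_one hq0 hq1.le ha'.le ha hb'.le hb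
      (by linarith [k.cast_nonneg (α := ℝ)])
  have hnat : Summable fun k : ℕ => f (k + 1) :=
    (hD.mul_left _).of_nonneg_of_le (fun _ => (rpow_pos_of_pos hq0 _).le) hle
  have hneg : (fun k : ℕ => f (-(k + 1))) = fun k : ℕ => f (k + 1) := by
    ext k; simp only [f, Int.cast_neg, abs_neg]
  have hf0 : f 0 = 1 := by simp [f, zero_rpow (hb'.trans_le hb).ne']
  have hsum := hnat.hasSum.of_add_one_of_neg_add_one (hneg ▸ hnat.hasSum)
  refine ⟨hsum.summable, ?_⟩
  have htail : ∑' k : ℕ, f (k + 1) ≤ q ^ a * ∑' k : ℕ, q ^ (a' * (((k : ℝ) + 1) ^ b' - 1)) :=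
    (hnat.tsum_le_tsum hle (hD.mul_left _)).trans_eq tsum_mul_left
  rw [hsum.tsum_eq, hf0, hneg]
  linarith

theorem summable_and_tsum_prod_rpow_le {ι : Type*} [Fintype ι] {q : ℝ} (hq0 : 0 < q)
    (hq1 : q < 1) {a b : ι → ℝ} {a' b' : ℝ} (ha' : 0 < a') (hb' : 0 < b') (ha : ∀ j, a' ≤ a j)
    (hb : ∀ j, b' ≤ b j) :
    Summable (fun h : ι → ℤ => ∏ j, q ^ (a j * |(h j : ℝ)| ^ b j)) ∧
      ∑' h : ι → ℤ, ∏ j, q ^ (a j * |(h j : ℝ)| ^ b j) ≤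
        ∏ j, (1 + 2 * (∑' k : ℕ, q ^ (a' * (((k : ℝ) + 1) ^ b' - 1))) * q ^ a j) := by
  have hc (j : ι) := summable_and_tsum_int_rpow_le hq0 hq1 ha' hb' (ha j) (hb j)
  have hbound (F : Finset (ι → ℤ)) : ∑ h ∈ F, ∏ j, q ^ (a j * |(h j : ℝ)| ^ b j) ≤
      ∏ j, (1 + 2 * (∑' k : ℕ, q ^ (a' * (((k : ℝ) + 1) ^ b' - 1))) * q ^ a j) :=
    (sum_prod_le_prod_tsum (fun _ _ => (rpow_pos_of_pos hq0 _).le) (fun j => (hc j).1) F).trans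
      (prod_le_prod (fun _ _ => tsum_nonneg fun _ => (rpow_pos_of_pos hq0 _).le)
        fun j _ => (hc j).2)
  exact ⟨summable_of_sum_le (fun _ => by positivity) hbound,
    Real.tsum_le_of_sum_le (fun _ => by positivity) hbound⟩

theorem stmt18_general (ω : ℝ) (hω : ω ∈ Set.Ioo (0:ℝ) 1) (s : ℕ)
    (a b : Fin s → ℝ) (aStar bStar : ℝ) (haStar : 0 < aStar) (hbStar : 0 < bStar)
    (ha : ∀ j, aStar ≤ a j) (hb : ∀ j, bStar ≤ b j)
    (η : ℝ) (hη : η ∈ Set.Ioo (0:ℝ) 1) :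
    ∀ n : ℕ, 1 ≤ n → ∃ S : Finset (Fin s → ℤ), S.card ≤ n ∧
      ∑' h : {h : Fin s → ℤ // h ∉ S}, ω ^ (∑ j, a j * |(h.1 j : ℝ)| ^ (b j)) ≤
        (η / (1 - η)) * (n : ℝ) ^ (-(1 - η) / η) *
          ∏ j, (1 + 2 * (∑' k : ℕ, ω ^ (η * aStar * (((k : ℝ) + 1) ^ bStar - 1))) *
            ω ^ (η * a j)) ^ ((1 : ℝ) / η) := by
  obtain ⟨hω0, hω1⟩ := hω
  obtain ⟨hη0, hη1⟩ := hη
  intro n hn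
  simp only [mul_assoc η, rpow_mul hω0.le]
  set q := ω ^ η
  have hq0 : 0 < q := rpow_pos_of_pos hω0 η
  obtain ⟨hμ, hμP⟩ :=
    summable_and_tsum_prod_rpow_le hq0 (rpow_lt_one hω0.le hω1 hη0) haStar hbStar ha hb
  set P := ∏ j, (1 + 2 * (∑' k : ℕ, q ^ (aStar * (((k : ℝ) + 1) ^ bStar - 1))) * q ^ a j)
  have hp : 1 < 1 / η := by rw [lt_div_iff₀ hη0]; linarith
  obtain ⟨S, hS, htail⟩ := exists_card_le_tsum_compl_rpow_le (fun _ => by positivity) hμ hp hn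
  refine ⟨S, hS, ?_⟩
  have hμω (h : Fin s → ℤ) : (∏ j, q ^ (a j * |(h j : ℝ)| ^ b j)) ^ (1 / η) =
      ω ^ (∑ j, a j * |(h j : ℝ)| ^ b j) := by
    rw [← rpow_sum_of_pos hq0, ← rpow_mul hω0.le, ← rpow_mul hω0.le]
    field_simp
  have hn_rpow :
      (n : ℝ) ^ (1 - 1 / η) / (1 / η - 1) = η / (1 - η) * (n : ℝ) ^ (-(1 - η) / η) := by
    rw [show 1 - 1 / η = -(1 - η) / η by field_simp; ring,
      show 1 / η - 1 = (1 - η) / η by field_simp]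
    field_simp
  calc _ = ∑' h : {h : Fin s → ℤ // h ∉ S}, (∏ j, q ^ (a j * |(h.1 j : ℝ)| ^ b j)) ^ (1 / η) :=
        tsum_congr fun h => (hμω h).symm
    _ ≤ _ := htail
    _ ≤ P ^ (1 / η) * ((n : ℝ) ^ (1 - 1 / η) / (1 / η - 1)) := by gcongr
    _ = _ := by rw [hn_rpow, ← finsetProd_rpow _ _ fun j _ => by positivity]; ring

/-- polynomial tail decay: for η ∈ (0,1) and every n ≥ 1 there is a
set S ⊆ ℤ^s of at most n indices with
∑_{h ∈ ℤ^s ∖ S} ω_h ≤ (η/(1-η)) n^{-(1-η)/η} ∏_{j=1}^s (1 + 2 D_η ω^{η a_j})^{1/η},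
where D_η = ∑_{h=1}^∞ ω^{η a_*(h^{b_*}-1)}. -/
theorem stmt18 (ω : ℝ) (hω : ω ∈ Set.Ioo (0:ℝ) 1) (s : ℕ) (hs : 1 ≤ s)
    (a b : Fin s → ℝ) (aStar bStar : ℝ) (haStar : 0 < aStar) (hbStar : 0 < bStar)
    (ha : ∀ j, aStar ≤ a j) (hb : ∀ j, bStar ≤ b j)
    (η : ℝ) (hη : η ∈ Set.Ioo (0:ℝ) 1) :
    ∀ n : ℕ, 1 ≤ n → ∃ S : Finset (Fin s → ℤ), S.card ≤ n ∧
      ∑' h : {h : Fin s → ℤ // h ∉ S}, ω ^ (∑ j, a j * |(h.1 j : ℝ)| ^ (b j)) ≤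
        (η / (1 - η)) * (n : ℝ) ^ (-(1 - η) / η) *
          ∏ j, (1 + 2 * (∑' k : ℕ, ω ^ (η * aStar * (((k : ℝ) + 1) ^ bStar - 1))) *
            ω ^ (η * a j)) ^ ((1 : ℝ) / η) :=
  stmt18_general ω hω s a b aStar bStar haStar hbStar ha hb η hη
end
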